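/- The spectrum of a densely defined closed paranormal operator on a nonzero complex Hilbert space is nonempty. -/

import Mathlib

/-!
If `σ(T)` were empty, `S = T⁻¹` would be a bounded operator with `T S = 1`. Paranormality passes
to `S`: `‖S y‖² ≤ ‖S² y‖ ‖y‖` is the paranormal inequality for `T` at `x = S² y`. A bounded
paranormal operator is normaloid, because `n ↦ ‖Sⁿ x‖` is log-convex, which gives
`‖S‖ⁿ ≤ ‖Sⁿ‖`, so Gelfand's formula yields `‖S‖ ≤ r(S)`. On the other hand, by the resolvent
identity every `k ≠ 0` in `σ(S)` would put `k⁻¹` in `σ(T)`, so `σ(S) ⊆ {0}`, `r(S) = 0` and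
`S = 0`, contradicting `T S = 1` on a nonzero space.
-/

open scoped InnerProductSpace
open LinearPMap

noncomputable section

variable {H : Type*} [NormedAddCommGroup H] [InnerProductSpace ℂ H] [CompleteSpace H]

/-- `T` is paranormal: `‖Tx‖² ≤ ‖T²x‖ ‖x‖` for all `x ∈ D(T²)`. -/
def Paranormal (T : H →ₗ.[ℂ] H) : Prop :=
  ∀ (x : T.domain) (h : T x ∈ T.domain), ‖T x‖ ^ 2 ≤ ‖T ⟨T x, h⟩‖ * ‖(x : H)‖

/-- The operator `T - μ • I`, with the same domain as `T`. -/
def shiftOp (T : H →ₗ.[ℂ] H) (μ : ℂ) : H →ₗ.[ℂ] H :=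
  ⟨T.domain, T.toFun - μ • T.domain.subtype⟩

/-- `T` is bijective from its domain onto `H` with a bounded everywhere-defined inverse. -/
def HasBoundedInverse (T : H →ₗ.[ℂ] H) : Prop :=
  ∃ S : H →L[ℂ] H, (∀ y : H, ∃ hy : S y ∈ T.domain, T ⟨S y, hy⟩ = y) ∧
    ∀ x : T.domain, S (T x) = (x : H)

/-- The spectrum of a (possibly unbounded) operator `T`. -/
def pSpectrum (T : H →ₗ.[ℂ] H) : Set ℂ :=
  {μ | ¬ HasBoundedInverse (shiftOp T μ)}

/-- `μ` is an isolated point of the spectrum of `T`. -/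
def IsolatedSpectralPoint (T : H →ₗ.[ℂ] H) (μ : ℂ) : Prop :=
  μ ∈ pSpectrum T ∧ ∃ ε > 0, ∀ ν ∈ pSpectrum T, ν ≠ μ → ε ≤ dist ν μ

open Classical in
/-- The resolvent `(T - z)⁻¹` as a bounded operator (junk value `0` if `z ∈ σ(T)`). -/
def resolventOp (T : H →ₗ.[ℂ] H) (z : ℂ) : H →L[ℂ] H :=
  if h : HasBoundedInverse (shiftOp T z) then h.choose else 0

/-- The Riesz projection `E_μ = (2πi)⁻¹ ∮_{|z-μ|=r} (z - T)⁻¹ dz`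
(note `(z - T)⁻¹ = -(T - z)⁻¹`). -/
def rieszProjection (T : H →ₗ.[ℂ] H) (μ : ℂ) (r : ℝ) : H →L[ℂ] H :=
  -(2 * Real.pi * Complex.I)⁻¹ • ∮ z in C(μ, r), resolventOp T z

/-- The kernel `N(T - μ I)` as a subset of `H`. -/
def kernelSet (T : H →ₗ.[ℂ] H) (μ : ℂ) : Set H :=
  {x | ∃ h : x ∈ T.domain, T ⟨x, h⟩ = μ • x}

/-- The range `R(T - μ I)` as a subset of `H`. -/
def rangeSet (T : H →ₗ.[ℂ] H) (μ : ℂ) : Set H :=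
  Set.range fun x : T.domain => T x - μ • (x : H)

open scoped NNReal ENNReal

theorem NNReal.pow_le_mul_pow_of_sq_le_mul {a : ℕ → ℝ≥0}
    (h : ∀ k, a (k + 1) ^ 2 ≤ a (k + 2) * a k) (n : ℕ) :
    a 1 ^ (n + 1) ≤ a (n + 1) * a 0 ^ n := by
  induction n generalizing a with
  | zero => simp
  | succ n ih =>
    rcases eq_or_ne (a 1) 0 with ha1 | ha1
    · simp [ha1]
    have shifted : a 2 ^ (n + 1) ≤ a (n + 2) * a 1 ^ n :=
      ih (a := fun k => a (k + 1)) fun k => h (k + 1)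
    refine le_of_mul_le_mul_right ?_ (pow_pos (pos_iff_ne_zero.mpr ha1) n)
    calc a 1 ^ (n + 2) * a 1 ^ n = (a 1 ^ 2) ^ (n + 1) := by ring
      _ ≤ (a 2 * a 0) ^ (n + 1) := by gcongr; exact h 0
      _ = a 2 ^ (n + 1) * a 0 ^ (n + 1) := mul_pow _ _ _
      _ ≤ a (n + 2) * a 1 ^ n * a 0 ^ (n + 1) := by gcongr
      _ = a (n + 2) * a 0 ^ (n + 1) * a 1 ^ n := by ring

theorem spectrum.nnnorm_le_spectralRadius_of_nnnorm_pow_le {A : Type*} [NormedRing A]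
    [NormedAlgebra ℂ A] [CompleteSpace A] {a : A} (h : ∀ n ≠ 0, ‖a‖₊ ^ n ≤ ‖a ^ n‖₊) :
    (‖a‖₊ : ℝ≥0∞) ≤ spectralRadius ℂ a := by
  refine ge_of_tendsto (spectrum.pow_nnnorm_pow_one_div_tendsto_nhds_spectralRadius a) ?_
  filter_upwards [Filter.eventually_ne_atTop 0] with n hn
  rw [one_div, ENNReal.le_rpow_inv_iff (by positivity), ENNReal.rpow_natCast]
  exact_mod_cast h n hn

theorem Algebra.isUnit_algebraMap_sub_of_sub_eq {R A : Type*} [Field R] [Ring A] [Algebra R A]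
    {a b : A} {k : R} (hk : k ≠ 0) (hab : b - a = k⁻¹ • (a * b)) (hba : b - a = k⁻¹ • (b * a)) :
    IsUnit (algebraMap R A k - a) := by
  have hab' : a * b = k • (b - a) := by rw [hab, smul_smul, mul_inv_cancel₀ hk, one_smul]
  have hba' : b * a = k • (b - a) := by rw [hba, smul_smul, mul_inv_cancel₀ hk, one_smul]
  -- For `a = T⁻¹` and `b = (T - k⁻¹)⁻¹` this is `(k - T⁻¹)⁻¹ = k⁻¹ + k⁻² (T - k⁻¹)⁻¹`.
  refine isUnit_iff_exists.mpr ⟨k⁻¹ • 1 + (k⁻¹ * k⁻¹) • b, ?_, ?_⟩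
  all_goals
    simp only [Algebra.algebraMap_eq_smul_one, sub_mul, mul_sub, mul_add, add_mul, mul_smul_comm,
      smul_mul_assoc, one_mul, mul_one, hab', hba']
    match_scalars <;> field_simp <;> ring

namespace ContinuousLinearMap

variable {𝕜 E : Type*} [NontriviallyNormedField 𝕜] [NormedAddCommGroup E] [NormedSpace 𝕜 E]

def IsParanormal (S : E →L[𝕜] E) : Prop :=
  ∀ x, ‖S x‖ ^ 2 ≤ ‖S (S x)‖ * ‖x‖

theorem IsParanormal.nnnorm_pow_le {S : E →L[𝕜] E} (hS : S.IsParanormal) {n : ℕ} (hn : n ≠ 0) :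
    ‖S‖₊ ^ n ≤ ‖S ^ n‖₊ := by
  have orbit (x : E) (k : ℕ) : ‖S x‖₊ ^ (k + 1) ≤ ‖(S ^ (k + 1)) x‖₊ * ‖x‖₊ ^ k := by
    refine NNReal.pow_le_mul_pow_of_sq_le_mul (a := fun k => ‖(S ^ k) x‖₊) (fun k => ?_) k
    have := hS ((S ^ k) x)
    simp only [pow_succ'] at this ⊢
    exact_mod_cast this
  obtain ⟨m, rfl⟩ := Nat.exists_eq_succ_of_ne_zero hn
  have hpos : (0 : ℝ) < (m + 1 : ℕ) := by positivity
  rw [← NNReal.rpow_natCast, ← NNReal.le_rpow_inv_iff hpos]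
  refine opNNNorm_le_bound S _ fun x => ?_
  rw [← NNReal.pow_rpow_inv_natCast ‖x‖₊ hn, ← NNReal.mul_rpow, NNReal.le_rpow_inv_iff hpos,
    NNReal.rpow_natCast]
  calc ‖S x‖₊ ^ (m + 1) ≤ ‖(S ^ (m + 1)) x‖₊ * ‖x‖₊ ^ m := orbit x m
    _ ≤ ‖S ^ (m + 1)‖₊ * ‖x‖₊ * ‖x‖₊ ^ m := by gcongr; exact le_opNNNorm _ _
    _ = ‖S ^ (m + 1)‖₊ * ‖x‖₊ ^ (m + 1) := by ring

end ContinuousLinearMap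

section

omit [CompleteSpace H]

theorem resolvent_sub_resolvent_eq {T : H →ₗ.[ℂ] H} {μ ν : ℂ} {R S : H →L[ℂ] H}
    (hR : ∀ y, ∃ hy : R y ∈ T.domain, T ⟨R y, hy⟩ - ν • R y = y)
    (hS : ∀ x : T.domain, S (T x - μ • (x : H)) = x) :
    R - S = (ν - μ) • (S * R) := by
  ext y
  obtain ⟨hy, hRy⟩ := hR y
  have shift_change : T ⟨R y, hy⟩ - μ • R y = y + (ν - μ) • R y := by
    linear_combination (norm := module) hRy
  have hSR : S y + (ν - μ) • S (R y) = R y := by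
    simpa [shift_change] using hS ⟨R y, hy⟩
  change R y - S y = (ν - μ) • S (R y)
  linear_combination (norm := module) -hSR

theorem Paranormal.isParanormal_of_rightInverse {T : H →ₗ.[ℂ] H} (hT : Paranormal T)
    {S : H →L[ℂ] H} (hS : ∀ y, ∃ hy : S y ∈ T.domain, T ⟨S y, hy⟩ = y) : S.IsParanormal := by
  intro y
  obtain ⟨hSy, hTSy⟩ := hS y
  obtain ⟨hSSy, hTSSy⟩ := hS (S y)
  have hTSSy_mem : T ⟨S (S y), hSSy⟩ ∈ T.domain := by rw [hTSSy]; exact hSy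
  have key := hT ⟨S (S y), hSSy⟩ hTSSy_mem
  have hsquare : (⟨T ⟨S (S y), hSSy⟩, hTSSy_mem⟩ : T.domain) = ⟨S y, hSy⟩ := Subtype.ext hTSSy
  rw [hsquare, hTSy, hTSSy] at key
  linarith

theorem ne_zero_of_rightInverse [Nontrivial H] {T : H →ₗ.[ℂ] H} {S : H →L[ℂ] H}
    (hS : ∀ y, ∃ hy : S y ∈ T.domain, T ⟨S y, hy⟩ = y) : S ≠ 0 := by
  rintro rfl
  obtain ⟨y, hy⟩ := exists_ne (0 : H)
  obtain ⟨h0, hT0⟩ := hS y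
  have : (⟨(0 : H →L[ℂ] H) y, h0⟩ : T.domain) = 0 := rfl
  rw [this, LinearPMap.map_zero] at hT0
  exact hy hT0.symm

theorem shiftOp_zero (T : H →ₗ.[ℂ] H) : shiftOp T 0 = T := by
  cases T
  simp [shiftOp]

theorem inv_mem_pSpectrum_of_mem_spectrum {T : H →ₗ.[ℂ] H} {S : H →L[ℂ] H}
    (hS_right : ∀ y, ∃ hy : S y ∈ T.domain, T ⟨S y, hy⟩ = y)
    (hS_left : ∀ x : T.domain, S (T x) = x)
    {k : ℂ} (hk : k ∈ spectrum ℂ S) (hk0 : k ≠ 0) : k⁻¹ ∈ pSpectrum T := by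
  rintro ⟨R, hR_right, hR_left⟩
  refine spectrum.mem_iff.mp hk (Algebra.isUnit_algebraMap_sub_of_sub_eq (b := R) hk0 ?_ ?_)
  · simpa using resolvent_sub_resolvent_eq (μ := 0) hR_right (by simpa using hS_left)
  · have := resolvent_sub_resolvent_eq (T := T) (R := S) (ν := 0) (by simpa using hS_right)
      hR_left
    linear_combination (norm := module) -this

end

theorem stmt4_general [Nontrivial H] (T : H →ₗ.[ℂ] H) (hpara : Paranormal T) :
    (pSpectrum T).Nonempty := by
  by_contra hempty
  have resolvent_exists (μ : ℂ) : HasBoundedInverse (shiftOp T μ) :=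
    not_not.mp fun hμ => hempty ⟨μ, hμ⟩
  obtain ⟨S, hS_right, hS_left⟩ : HasBoundedInverse T := shiftOp_zero T ▸ resolvent_exists 0
  have hspec : spectrum ℂ S ⊆ {0} := fun k hk => by
    by_contra hk0
    exact inv_mem_pSpectrum_of_mem_spectrum hS_right hS_left hk hk0 (resolvent_exists k⁻¹)
  have hrad : spectralRadius ℂ S = 0 :=
    le_antisymm (iSup₂_le fun k hk => by simp [Set.mem_singleton_iff.mp (hspec hk)]) bot_le
  have hnorm : (‖S‖₊ : ℝ≥0∞) ≤ spectralRadius ℂ S :=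
    spectrum.nnnorm_le_spectralRadius_of_nnnorm_pow_le fun _ hn =>
      (hpara.isParanormal_of_rightInverse hS_right).nnnorm_pow_le hn
  exact ne_zero_of_rightInverse hS_right (by simpa [hrad] using hnorm)

/-- The spectrum of a densely defined closed paranormal operator on a nonzero complex Hilbert
space is nonempty. -/
theorem stmt4 [Nontrivial H] (T : H →ₗ.[ℂ] H) (hdense : Dense (T.domain : Set H))
    (hclosed : T.IsClosed) (hpara : Paranormal T) :
    (pSpectrum T).Nonempty :=
  stmt4_general T hpara

end
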